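/- arXiv:2211.12603 — 6 statements merged into one kernel-verified Lean document; each statement's English description precedes it below -/
import Mathlib

section
/- For a feed-forward CRN, a configuration D is reachable from configuration I if and only if D is reachable from I by an ordered application of rules, i.e., a sequence in which all applications of each rule occur contiguously, with rules appearing in the feed-forward order. -/
abbrev Config (Λ : Type*) := Λ → ℕ
abbrev Rule (Λ : Type*) := (Λ → ℕ) × (Λ → ℕ)

def Applicable {Λ : Type*} (R : Rule Λ) (C : Config Λ) : Prop := ∀ i, R.1 i ≤ C i

def applyRule {Λ : Type*} (R : Rule Λ) (C : Config Λ) : Config Λ :=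
  fun i => C i + R.2 i - R.1 i

/-- One step: apply some applicable rule of `Γ`. -/
def Step {Λ : Type*} (Γ : Set (Rule Λ)) (C C' : Config Λ) : Prop :=
  ∃ R ∈ Γ, Applicable R C ∧ C' = applyRule R C

/-- Reachability: reflexive-transitive closure of single rule applications. -/
def Reachable {Λ : Type*} (Γ : Set (Rule Λ)) : Config Λ → Config Λ → Prop :=
  Relation.ReflTransGen (Step Γ)

/-- A list of rules is a feed-forward ordering if products of any rule never occur
as reactants of earlier rules of the ordering. -/
def FFList {Λ : Type*} (l : List (Rule Λ)) : Prop :=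
  l.Pairwise (fun Re Rl => ∀ i, Rl.2 i > 0 → Re.1 i = 0)

/-- Ordered application along a list of rules: apply the first rule some number of times,
then the second rule some number of times, and so on. -/
def OrderedReach {Λ : Type*} : List (Rule Λ) → Config Λ → Config Λ → Prop
  | [], C, C' => C = C'
  | R :: rest, C, C' => ∃ M, Relation.ReflTransGen (Step {R}) C M ∧ OrderedReach rest M C'

/-!
Let `R` be the first rule of the feed-forward ordering. Since no rule produces a reactant
of `R`, an application of `R` that directly follows an application of another rule `S`
can be performed before it instead, with the same result. Hence every execution can be
rearranged so that all applications of `R` come first, and the remaining ones use only the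
later rules, to which the same argument applies by induction on the ordering.
-/

namespace Relation

variable {α : Type*} {r s : α → α → Prop}

theorem ReflTransGen.exists_swap_of_commute
    (hcomm : ∀ a b c, s a b → r b c → ∃ b', r a b' ∧ s b' c)
    {a b c : α} (hs : s a b) (hr : ReflTransGen r b c) :
    ∃ b', ReflTransGen r a b' ∧ s b' c := by
  induction hr using ReflTransGen.head_induction_on generalizing a with
  | refl => exact ⟨a, .refl, hs⟩
  | head hbd _ ih =>
    obtain ⟨a', ha', hs'⟩ := hcomm _ _ _ hs hbd
    obtain ⟨b', hb', hs''⟩ := ih hs'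
    exact ⟨b', .head ha' hb', hs''⟩

theorem ReflTransGen.exists_reflTransGen_of_sup
    (hcomm : ∀ a b c, s a b → r b c → ∃ b', r a b' ∧ s b' c)
    {a c : α} (h : ReflTransGen (r ⊔ s) a c) :
    ∃ b, ReflTransGen r a b ∧ ReflTransGen s b c := by
  induction h using ReflTransGen.head_induction_on with
  | refl => exact ⟨_, .refl, .refl⟩
  | head hstep _ ih =>
    obtain ⟨b, hr, hs⟩ := ih
    rcases hstep with hstep | hstep
    · exact ⟨b, .head hstep hr, hs⟩
    · obtain ⟨b', hr', hs'⟩ := ReflTransGen.exists_swap_of_commute hcomm hstep hr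
      exact ⟨b', hr', .head hs' hs⟩

end Relation

section Swap

variable {Λ : Type*}

theorem Step.mono {Γ Δ : Set (Rule Λ)} (h : Γ ⊆ Δ) : Step Γ ≤ Step Δ :=
  fun _ _ ⟨R, hR, happ, hC⟩ => ⟨R, h hR, happ, hC⟩

theorem Reachable.mono {Γ Δ : Set (Rule Λ)} (h : Γ ⊆ Δ) : Reachable Γ ≤ Reachable Δ :=
  Relation.ReflTransGen.mono (Step.mono h)

theorem step_insert (R : Rule Λ) (Γ : Set (Rule Λ)) :
    Step (insert R Γ) = Step {R} ⊔ Step Γ := by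
  ext C C'
  simp only [Step, Set.mem_insert_iff, Set.mem_singleton_iff, Pi.sup_apply, sup_Prop_eq]
  constructor
  · rintro ⟨S, hS | hS, hrest⟩
    exacts [.inl ⟨S, hS, hrest⟩, .inr ⟨S, hS, hrest⟩]
  · rintro (⟨S, hS, hrest⟩ | ⟨S, hS, hrest⟩)
    exacts [⟨S, .inl hS, hrest⟩, ⟨S, .inr hS, hrest⟩]

theorem reachable_empty {C C' : Config Λ} : Reachable ∅ C C' ↔ C = C' := by
  refine ⟨fun h => ?_, fun h => h ▸ .refl⟩
  rcases h.cases_head with h | ⟨_, ⟨_, hR, _⟩, _⟩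
  exacts [h, hR.elim]

variable {R S : Rule Λ}

theorem applicable_and_applyRule_comm (hff : ∀ i, S.2 i > 0 → R.1 i = 0) {C : Config Λ}
    (hS : Applicable S C) (hR : Applicable R (applyRule S C)) :
    Applicable R C ∧ Applicable S (applyRule R C) ∧
      applyRule R (applyRule S C) = applyRule S (applyRule R C) := by
  have hdisj : ∀ i, R.1 i = 0 ∨ S.2 i = 0 := fun i =>
    (Nat.eq_zero_or_pos (S.2 i)).elim .inr (.inl ∘ hff i)
  refine ⟨fun i => ?_, fun i => ?_, funext fun i => ?_⟩ <;>
  · have := hS i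
    have := hR i
    simp only [applyRule] at *
    rcases hdisj i with h | h <;> omega

theorem step_swap {Γ : Set (Rule Λ)} (hff : ∀ S ∈ Γ, ∀ i, S.2 i > 0 → R.1 i = 0)
    {C₁ C₂ C₃ : Config Λ} (hS : Step Γ C₁ C₂) (hR : Step {R} C₂ C₃) :
    ∃ C₂', Step {R} C₁ C₂' ∧ Step Γ C₂' C₃ := by
  obtain ⟨S, hSΓ, hSapp, rfl⟩ := hS
  obtain ⟨R, rfl, hRapp, rfl⟩ := hR
  obtain ⟨hRapp', hSapp', hcomm⟩ := applicable_and_applyRule_comm (hff S hSΓ) hSapp hRapp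
  exact ⟨_, ⟨R, rfl, hRapp', rfl⟩, ⟨S, hSΓ, hSapp', hcomm⟩⟩

theorem Reachable.exists_head_block {Γ : Set (Rule Λ)}
    (hff : ∀ S ∈ Γ, ∀ i, S.2 i > 0 → R.1 i = 0) {I D : Config Λ}
    (h : Reachable (insert R Γ) I D) :
    ∃ M, Relation.ReflTransGen (Step {R}) I M ∧ Reachable Γ M D := by
  rw [Reachable, step_insert] at h
  exact h.exists_reflTransGen_of_sup fun _ _ _ => step_swap hff

end Swap

theorem stmt1_general {Λ : Type*} (l : List (Rule Λ)) (hff : FFList l)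
    (I D : Config Λ) :
    Reachable {R | R ∈ l} I D ↔ OrderedReach l I D := by
  induction l generalizing I with
  | nil =>
    simpa only [List.not_mem_nil, Set.ofPred_false, OrderedReach] using reachable_empty
  | cons R rest ih =>
    obtain ⟨hhead, htail⟩ := List.pairwise_cons.mp hff
    rw [List.setOfPred_mem_cons]
    constructor
    · intro h
      obtain ⟨M, hR, hrest⟩ := Reachable.exists_head_block hhead h
      exact ⟨M, hR, (ih htail M).mp hrest⟩
    · rintro ⟨M, hR, hrest⟩
      exact (Reachable.mono (Set.singleton_subset_iff.mpr (Set.mem_insert _ _)) _ _ hR).trans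
        (Reachable.mono (Set.subset_insert _ _) _ _ ((ih htail M).mpr hrest))

/-- in a feed-forward CRN, `D` is reachable from `I` iff it is reachable by
an ordered application of the rules in the feed-forward order. -/
theorem stmt1 {Λ : Type*} (l : List (Rule Λ)) (hff : FFList l) (hnd : l.Nodup)
    (I D : Config Λ) :
    Reachable {R | R ∈ l} I D ↔ OrderedReach l I D :=
  stmt1_general l hff I D
end

section
/- If a configuration D is inconsistent with configuration I for a non-void leaf rule R ∈ Γ (i.e., there is no nonnegative integer x with D − x·(R_p − R_r) agreeing with I on all product species of R while R remains applicable appropriately), then D is not reachable from I under Γ. -/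
/-- Stated additively, `D + x·R_r = I + x·R_p`, to avoid truncated subtraction in `ℕ`. -/
def ConsistentFor {Λ : Type*} (R : Rule Λ) (I D : Config Λ) : Prop :=
  ∃ x : ℕ, ∀ i, R.2 i ≠ 0 → D i + x * R.1 i = I i + x * R.2 i

section

variable {Λ : Type*}

theorem applyRule_add_fst {R : Rule Λ} {C : Config Λ} (h : Applicable R C) (i : Λ) :
    applyRule R C i + R.1 i = C i + R.2 i := by
  have := h i
  unfold applyRule
  omega

theorem applyRule_apply_of_eq_zero {R : Rule Λ} (C : Config Λ) {i : Λ}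
    (h₁ : R.1 i = 0) (h₂ : R.2 i = 0) : applyRule R C i = C i := by
  simp [applyRule, h₁, h₂]

namespace ConsistentFor

variable {R : Rule Λ} {I C : Config Λ}

theorem refl (R : Rule Λ) (I : Config Λ) : ConsistentFor R I I :=
  ⟨0, fun _ _ => by simp⟩

theorem applyRule_self (hC : ConsistentFor R I C) (happ : Applicable R C) :
    ConsistentFor R I (applyRule R C) := by
  obtain ⟨x, hx⟩ := hC
  refine ⟨x + 1, fun i hi => ?_⟩
  linear_combination applyRule_add_fst happ i + hx i hi

theorem applyRule_of_disjoint (hC : ConsistentFor R I C) {R' : Rule Λ}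
    (hdisj : ∀ i, R.2 i ≠ 0 → R'.1 i = 0 ∧ R'.2 i = 0) :
    ConsistentFor R I (applyRule R' C) := by
  obtain ⟨x, hx⟩ := hC
  refine ⟨x, fun i hi => ?_⟩
  rw [applyRule_apply_of_eq_zero C (hdisj i hi).1 (hdisj i hi).2]
  exact hx i hi

theorem of_reachable {Γ : Set (Rule Λ)}
    (hleaf : ∀ R' ∈ Γ, R' ≠ R → ∀ i, R.2 i > 0 → R'.1 i = 0)
    (honly : ∀ R' ∈ Γ, R' ≠ R → ∀ i, R.2 i > 0 → R'.2 i = 0)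
    {D : Config Λ} (hreach : Reachable Γ I D) : ConsistentFor R I D := by
  induction hreach with
  | refl => exact refl R I
  | tail _ hstep ih =>
    obtain ⟨R', hR'Γ, happ, rfl⟩ := hstep
    by_cases hRR : R' = R
    · subst hRR
      exact ih.applyRule_self happ
    · exact ih.applyRule_of_disjoint fun i hi =>
        ⟨hleaf R' hR'Γ hRR i (Nat.pos_of_ne_zero hi), honly R' hR'Γ hRR i (Nat.pos_of_ne_zero hi)⟩

end ConsistentFor

end

theorem stmt5_general {Λ : Type*} (Γ : Set (Rule Λ)) (R : Rule Λ)
    (hleaf : ∀ R' ∈ Γ, R' ≠ R → ∀ i, R.2 i > 0 → R'.1 i = 0)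
    (honly : ∀ R' ∈ Γ, R' ≠ R → ∀ i, R.2 i > 0 → R'.2 i = 0)
    (I D : Config Λ)
    (hinc : ¬ ∃ x : ℕ, ∀ i, R.2 i ≠ 0 → D i + x * R.1 i = I i + x * R.2 i) :
    ¬ Reachable Γ I D :=
  fun hreach => hinc (ConsistentFor.of_reachable hleaf honly hreach)

/-- let `R ∈ Γ` be a non-void leaf rule (no product of `R` is a reactant
of any other rule of `Γ`, and — the key fact that counts of `R`'s product species can
only be changed by `R` itself — no other rule of `Γ` produces a product species of `R`).
If `D` is inconsistent with `I` for `R`, i.e. there is no nonnegative integer `x` with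
`D - x·(R_p - R_r)` agreeing with `I` on all product species of `R`
(stated additively as `D i + x·R_r i = I i + x·R_p i`), then `D` is not reachable
from `I` under `Γ`. -/
theorem stmt5 {Λ : Type*} (Γ : Set (Rule Λ)) (R : Rule Λ) (hR : R ∈ Γ)
    (hleaf : ∀ R' ∈ Γ, R' ≠ R → ∀ i, R.2 i > 0 → R'.1 i = 0)
    (honly : ∀ R' ∈ Γ, R' ≠ R → ∀ i, R.2 i > 0 → R'.2 i = 0)
    (hnonvoid : ∃ i, R.1 i < R.2 i)
    (I D : Config Λ)
    (hinc : ¬ ∃ x : ℕ, ∀ i, R.2 i ≠ 0 → D i + x * R.1 i = I i + x * R.2 i) :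
    ¬ Reachable Γ I D :=
  stmt5_general Γ R hleaf honly I D hinc
end

section
/- Let H = (X, Y, Z, T) be a 3-dimensional matching instance with |X| = |Y| = |Z| = n. Construct the CRN with species Λ = X ∪ Y ∪ Z (disjoint) and rules Γ = { x + y + z → ∅ : (x,y,z) ∈ T }, initial configuration I assigning count 1 to every species, and target configuration D assigning count 0 to every species. Then D is reachable from I under Γ if and only if there exists a perfect 3-dimensional matching, i.e., a subset M ⊆ T covering every vertex of X ∪ Y ∪ Z exactly once. -/
def rOf {X Y Z : Type*} [DecidableEq X] [DecidableEq Y] [DecidableEq Z]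
    (t : X × Y × Z) : (X ⊕ Y ⊕ Z) → ℕ
  | Sum.inl x => if x = t.1 then 1 else 0
  | Sum.inr (Sum.inl y) => if y = t.2.1 then 1 else 0
  | Sum.inr (Sum.inr z) => if z = t.2.2 then 1 else 0

def voidRules {Λ ι : Type*} (T : Finset ι) (r : ι → Config Λ) : Set (Rule Λ) :=
  {R | ∃ t ∈ T, R = (r t, fun _ => 0)}

section VoidRules

variable {Λ ι : Type*} {T : Finset ι} {r : ι → Config Λ}

lemma applyRule_void (R C : Config Λ) : applyRule (R, fun _ => 0) C = C - R := by
  funext i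
  simp [applyRule]

lemma reachable_sum_zero {M : Finset ι} (hMT : M ⊆ T) :
    Reachable (voidRules T r) (∑ t ∈ M, r t) 0 := by
  classical
  induction M using Finset.induction_on with
  | empty => exact Relation.ReflTransGen.refl
  | @insert t M htM ih =>
    rw [Finset.insert_subset_iff] at hMT
    refine Relation.ReflTransGen.head ⟨_, ⟨t, hMT.1, rfl⟩, ?_, ?_⟩ (ih hMT.2)
    · intro i
      simp [Finset.sum_insert htM]
    · rw [applyRule_void, Finset.sum_insert htM, add_tsub_cancel_left]

lemma exists_multiset_of_reachable_zero {C : Config Λ} (h : Reachable (voidRules T r) C 0) :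
    ∃ M : Multiset ι, (∀ t ∈ M, t ∈ T) ∧ (M.map r).sum = C := by
  induction h using Relation.ReflTransGen.head_induction_on with
  | refl => exact ⟨0, by simp, rfl⟩
  | @head C C' hstep _ ih =>
    obtain ⟨_, ⟨t, htT, rfl⟩, happ, rfl⟩ := hstep
    obtain ⟨M, hMT, hM⟩ := ih
    refine ⟨t ::ₘ M, ?_, ?_⟩
    · simpa [htT] using hMT
    · rw [Multiset.map_cons, Multiset.sum_cons, hM, applyRule_void]
      exact add_tsub_cancel_of_le happ

lemma Multiset.nodup_of_map_sum_le_one {M : Multiset ι} (hr : ∀ t, r t ≠ 0)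
    (hM : (M.map r).sum ≤ 1) : M.Nodup := by
  rw [Multiset.nodup_iff_ne_cons_cons]
  rintro t M rfl
  obtain ⟨i, hi⟩ : ∃ i, r t i ≠ 0 := Function.ne_iff.mp (hr t)
  have := hM i
  simp only [Multiset.map_cons, Multiset.sum_cons, Pi.add_apply, Pi.one_apply] at this
  omega

theorem reachable_zero_iff_exists_sum_eq (hr : ∀ t, r t ≠ 0) {C : Config Λ} (hC : C ≤ 1) :
    Reachable (voidRules T r) C 0 ↔ ∃ M ⊆ T, ∑ t ∈ M, r t = C := by
  refine ⟨fun h => ?_, fun ⟨M, hMT, hM⟩ => hM ▸ reachable_sum_zero hMT⟩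
  obtain ⟨M, hMT, rfl⟩ := exists_multiset_of_reachable_zero h
  exact ⟨⟨M, Multiset.nodup_of_map_sum_le_one hr hC⟩, hMT, rfl⟩

end VoidRules

lemma Finset.sum_boole_eq_one_iff {α : Type*} {M : Finset α} {p : α → Prop} [DecidablePred p] :
    ∑ t ∈ M, (if p t then 1 else 0) = 1 ↔ ∃! t, t ∈ M ∧ p t := by
  rw [Finset.sum_boole, Nat.cast_id, Finset.card_eq_one_iff_existsUnique]
  simp only [Finset.mem_filter]

section ThreeDimensionalMatching

variable {X Y Z : Type*} [DecidableEq X] [DecidableEq Y] [DecidableEq Z]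

lemma rOf_ne_zero (t : X × Y × Z) : rOf t ≠ 0 :=
  Function.ne_iff.mpr ⟨Sum.inl t.1, by simp [rOf]⟩

lemma sum_rOf_eq_one_iff {M : Finset (X × Y × Z)} :
    ∑ t ∈ M, rOf t = 1 ↔
      (∀ x : X, ∃! t, t ∈ M ∧ t.1 = x) ∧
      (∀ y : Y, ∃! t, t ∈ M ∧ t.2.1 = y) ∧
      (∀ z : Z, ∃! t, t ∈ M ∧ t.2.2 = z) := by
  simp only [funext_iff, Finset.sum_apply, Pi.one_apply, Sum.forall, rOf, Finset.sum_boole_eq_one_iff,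
    @eq_comm X, @eq_comm Y, @eq_comm Z]

end ThreeDimensionalMatching

theorem stmt8_general {X Y Z : Type*}
    [DecidableEq X] [DecidableEq Y] [DecidableEq Z]
    (T : Finset (X × Y × Z)) :
    Reachable {R : Rule (X ⊕ Y ⊕ Z) | ∃ t ∈ T, R = (rOf t, fun _ => 0)}
        (fun _ => 1) (fun _ => 0) ↔
      ∃ M : Finset (X × Y × Z), M ⊆ T ∧
        (∀ x : X, ∃! t, t ∈ M ∧ t.1 = x) ∧
        (∀ y : Y, ∃! t, t ∈ M ∧ t.2.1 = y) ∧
        (∀ z : Z, ∃! t, t ∈ M ∧ t.2.2 = z) := by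
  change Reachable (voidRules T rOf) 1 0 ↔ _
  rw [reachable_zero_iff_exists_sum_eq rOf_ne_zero le_rfl]
  exact exists_congr fun M => and_congr_right fun _ => sum_rOf_eq_one_iff

/-- for a 3DM instance `(X, Y, Z, T)` with `|X| = |Y| = |Z|`, the all-zeros
configuration is reachable from the all-ones configuration under the rules
`{ S_x + S_y + S_z → ∅ : (x,y,z) ∈ T }` iff there is a perfect 3-dimensional matching
`M ⊆ T` covering every vertex exactly once. -/
theorem stmt8 {X Y Z : Type*} [Fintype X] [Fintype Y] [Fintype Z]
    [DecidableEq X] [DecidableEq Y] [DecidableEq Z]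
    (hXY : Fintype.card X = Fintype.card Y) (hYZ : Fintype.card Y = Fintype.card Z)
    (T : Finset (X × Y × Z)) :
    Reachable {R : Rule (X ⊕ Y ⊕ Z) | ∃ t ∈ T, R = (rOf t, fun _ => 0)}
        (fun _ => 1) (fun _ => 0) ↔
      ∃ M : Finset (X × Y × Z), M ⊆ T ∧
        (∀ x : X, ∃! t, t ∈ M ∧ t.1 = x) ∧
        (∀ y : Y, ∃! t, t ∈ M ∧ t.2.1 = y) ∧
        (∀ z : Z, ∃! t, t ∈ M ∧ t.2.2 = z) :=
  stmt8_general T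
end

section
/- Let (Λ, Γ) be a bipartite CRN with all rules of size (2,0): Λ = Λ₁ ⊔ Λ₂ and every rule is x + y → ∅ with x ∈ Λ₁, y ∈ Λ₂. Given configurations I ≥ D with Σ_{x∈Λ₁}(I−D)(x) = Σ_{y∈Λ₂}(I−D)(y), the configuration D is reachable from I if and only if the flow network—with source connected to each x ∈ Λ₁ with capacity (I−D)(x), each y ∈ Λ₂ connected to the sink with capacity (I−D)(y), and infinite-capacity edges between x and y whenever x + y → ∅ ∈ Γ—admits a flow of value volume(I−D)/2. -/
/-!
A rule `x + y → ∅` only consumes, so a rule sequence from `I` to `D` is determined, up to order,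
by how often each rule fires, and it is executable in any order as long as the configuration
stays nonnegative. Hence `D` is reachable iff `I - D` is a nonnegative integer combination
`∑ f (x, y) • (x + y)` of the reactant vectors of the rules; reading this off coordinate by
coordinate gives exactly the integral flow `f` routing the demands.
-/

section ConsumptionRules

variable {Λ ι : Type*}

def consumptionRules (S : Finset ι) (c : ι → Config Λ) : Set (Rule Λ) :=
  {R | ∃ i ∈ S, R = (c i, fun _ => 0)}

variable {S : Finset ι} {c : ι → Config Λ}

theorem applyRule_consume (v C : Config Λ) : applyRule (v, fun _ => 0) C = C - v := by
  funext j
  simp [applyRule]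

theorem step_consumptionRules_iff {C C' : Config Λ} :
    Step (consumptionRules S c) C C' ↔ ∃ i ∈ S, c i ≤ C ∧ C' = C - c i := by
  simp only [Step, consumptionRules, Set.mem_ofPred_eq]
  constructor
  · rintro ⟨_, ⟨i, hi, rfl⟩, happ, rfl⟩
    exact ⟨i, hi, happ, applyRule_consume _ _⟩
  · rintro ⟨i, hi, hle, rfl⟩
    exact ⟨_, ⟨i, hi, rfl⟩, hle, (applyRule_consume _ _).symm⟩

theorem reachable_add_nsmul {i : ι} (hi : i ∈ S) (C : Config Λ) (n : ℕ) :
    Reachable (consumptionRules S c) (C + n • c i) C := by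
  induction n with
  | zero =>
    rw [zero_smul, add_zero]
    exact Relation.ReflTransGen.refl
  | succ n ih =>
    refine Relation.ReflTransGen.head (step_consumptionRules_iff.mpr ⟨i, hi, ?_, ?_⟩) ih
    · rw [succ_nsmul]
      exact le_add_self.trans (add_le_add_right le_add_self _)
    · rw [succ_nsmul, ← add_assoc, add_tsub_cancel_right]

theorem reachable_add_sum (C : Config Λ) (f : ι → ℕ) (T : Finset ι) (hT : T ⊆ S) :
    Reachable (consumptionRules S c) (C + ∑ i ∈ T, f i • c i) C := by
  classical
  induction T using Finset.induction_on with
  | empty =>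
    rw [Finset.sum_empty, add_zero]
    exact Relation.ReflTransGen.refl
  | insert i T hiT ih =>
    rw [Finset.sum_insert hiT, add_comm (f i • c i), ← add_assoc]
    exact (reachable_add_nsmul (hT (Finset.mem_insert_self i T)) _ _).trans
      (ih ((Finset.subset_insert i T).trans hT))

variable [Fintype ι]

theorem exists_eq_add_sum_of_reachable [DecidableEq ι] {I D : Config Λ}
    (h : Reachable (consumptionRules S c) I D) :
    ∃ f : ι → ℕ, (∀ i ∉ S, f i = 0) ∧ I = D + ∑ i, f i • c i := by
  induction h with
  | refl => exact ⟨0, fun _ _ => rfl, by simp⟩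
  | tail _ hstep ih =>
    obtain ⟨f, hfS, hI⟩ := ih
    obtain ⟨i, hi, hle, rfl⟩ := step_consumptionRules_iff.mp hstep
    refine ⟨f + Pi.single i 1, fun j hj => ?_, ?_⟩
    · have hji : j ≠ i := by rintro rfl; exact hj hi
      simp [hfS j hj, hji]
    · have hsingle : ∑ j, (Pi.single i 1 : ι → ℕ) j • c j = c i := by
        rw [Fintype.sum_eq_single i fun j hj => by rw [Pi.single_eq_of_ne hj, zero_smul],
          Pi.single_eq_same, one_smul]
      simp only [Pi.add_apply, add_smul, Finset.sum_add_distrib, hsingle]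
      rw [hI, add_comm _ (c i), ← add_assoc, tsub_add_cancel_of_le hle]

theorem reachable_consumptionRules_iff [DecidableEq ι] {I D : Config Λ} :
    Reachable (consumptionRules S c) I D ↔
      ∃ f : ι → ℕ, (∀ i ∉ S, f i = 0) ∧ I = D + ∑ i, f i • c i := by
  refine ⟨exists_eq_add_sum_of_reachable, ?_⟩
  rintro ⟨f, hfS, rfl⟩
  rw [← Finset.sum_subset (Finset.subset_univ S) fun i _ hi => by simp [hfS i hi]]
  exact reachable_add_sum D f S subset_rfl

end ConsumptionRules

section Bipartite

variable {A B : Type*} [DecidableEq A] [DecidableEq B]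

def pairReactants (p : A × B) : Config (A ⊕ B) :=
  Pi.single (Sum.inl p.1) 1 + Pi.single (Sum.inr p.2) 1

variable [Fintype A] [Fintype B]

theorem sum_smul_pairReactants_inl (f : A × B → ℕ) (a : A) :
    (∑ p, f p • pairReactants p) (Sum.inl a) = ∑ b, f (a, b) := by
  simp only [pairReactants, Finset.sum_apply, Pi.smul_apply, Pi.add_apply, Fintype.sum_prod_type]
  simp [Pi.single_apply]

theorem sum_smul_pairReactants_inr (f : A × B → ℕ) (b : B) :
    (∑ p, f p • pairReactants p) (Sum.inr b) = ∑ a, f (a, b) := by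
  simp only [pairReactants, Finset.sum_apply, Pi.smul_apply, Pi.add_apply, Fintype.sum_prod_type]
  simp [Pi.single_apply]

end Bipartite

theorem stmt11_general {A B : Type*} [Fintype A] [Fintype B] [DecidableEq A] [DecidableEq B]
    (E : Finset (A × B)) (I D : Config (A ⊕ B))
    (hID : ∀ i, D i ≤ I i) :
    Reachable {R : Rule (A ⊕ B) | ∃ p ∈ E,
        R = ((Pi.single (Sum.inl p.1) 1 + Pi.single (Sum.inr p.2) 1 : (A ⊕ B) → ℕ),
             fun _ => 0)} I D ↔
      ∃ f : A × B → ℕ, (∀ p ∉ E, f p = 0) ∧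
        (∀ a : A, ∑ b : B, f (a, b) = I (Sum.inl a) - D (Sum.inl a)) ∧
        (∀ b : B, ∑ a : A, f (a, b) = I (Sum.inr b) - D (Sum.inr b)) := by
  refine (reachable_consumptionRules_iff (S := E) (c := pairReactants)).trans
    (exists_congr fun f => and_congr_right fun _ => ?_)
  have hdemand : ∀ i (n : ℕ), I i = D i + n ↔ n = I i - D i := fun i n => by
    rw [eq_tsub_iff_add_eq_of_le (hID i), add_comm, eq_comm]
  rw [funext_iff, Sum.forall]
  simp only [Pi.add_apply, hdemand, sum_smul_pairReactants_inl, sum_smul_pairReactants_inr]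

/-- bipartite CRN with species `Λ₁ ⊔ Λ₂ = A ⊕ B` and size-(2,0) rules
`x + y → ∅` for `(x,y) ∈ E ⊆ A × B`. Given `I ≥ D` with balanced demands, `D` is
reachable from `I` iff the flow network (source→`x` with capacity `(I-D)(x)`,
`y`→sink with capacity `(I-D)(y)`, infinite capacity rule edges) has a flow of value
`vol(I-D)/2`; equivalently (max-flow integrality), iff there are nonnegative integers
`f(x,y)` supported on the rule edges routing all the demands. -/
theorem stmt11 {A B : Type*} [Fintype A] [Fintype B] [DecidableEq A] [DecidableEq B]
    (E : Finset (A × B)) (I D : Config (A ⊕ B))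
    (hID : ∀ i, D i ≤ I i)
    (hbal : ∑ a : A, (I (Sum.inl a) - D (Sum.inl a)) =
            ∑ b : B, (I (Sum.inr b) - D (Sum.inr b))) :
    Reachable {R : Rule (A ⊕ B) | ∃ p ∈ E,
        R = ((Pi.single (Sum.inl p.1) 1 + Pi.single (Sum.inr p.2) 1 : (A ⊕ B) → ℕ),
             fun _ => 0)} I D ↔
      ∃ f : A × B → ℕ, (∀ p ∉ E, f p = 0) ∧
        (∀ a : A, ∑ b : B, f (a, b) = I (Sum.inl a) - D (Sum.inl a)) ∧
        (∀ b : B, ∑ a : A, f (a, b) = I (Sum.inr b) - D (Sum.inr b)) :=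
  stmt11_general E I D hID
end

section
/- In a feed-forward CRN with no autogenesis rules, for any valid sequence of rule applications from configuration I, the number of applications of each individual rule is at most the volume of the configuration immediately before its (contiguous) block of applications in the ordered form; consequently, for every rule R in an ordered application from I to D, the number of applications of R is bounded by the maximum volume attained along the sequence, which is at most volume(I) + volume(D) (since non-autogenesis rules consume at least one species per application and volumes only increase via the same applications that reach D). In particular, every rule with a strictly positive application vector volume is applied at most (volume(D) − volume(I))/(volume gain of R) + volume(I) times. -/
/-- A sequence of exactly `n` rule applications from `C` to `C'`. -/
inductive StepsN {Λ : Type*} (Γ : Set (Rule Λ)) : ℕ → Config Λ → Config Λ → Prop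
  | refl (C : Config Λ) : StepsN Γ 0 C C
  | tail {n : ℕ} {C M C' : Config Λ} :
      StepsN Γ n C M → Step Γ M C' → StepsN Γ (n + 1) C C'

def vol {Λ : Type*} [Fintype Λ] (C : Λ → ℕ) : ℕ := ∑ i, C i

/-
Each application of a rule that strictly consumes `s` lowers the count of `s` by at least one,
and counts are natural numbers, so a run of such applications cannot be longer than the initial
count of `s`.
-/

section Consuming

variable {Λ : Type*} {Γ : Set (Rule Λ)} {s : Λ}

theorem applyRule_lt_of_consumes {R : Rule Λ} {C : Config Λ} (happ : Applicable R C)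
    (hcons : R.2 s < R.1 s) : applyRule R C s < C s := by
  have := happ s
  simp only [applyRule]
  omega

theorem Step.lt_of_forall_consumes (hΓ : ∀ R ∈ Γ, R.2 s < R.1 s) {C C' : Config Λ}
    (h : Step Γ C C') : C' s < C s := by
  obtain ⟨R, hR, happ, rfl⟩ := h
  exact applyRule_lt_of_consumes happ (hΓ R hR)

theorem StepsN.add_le_of_forall_consumes (hΓ : ∀ R ∈ Γ, R.2 s < R.1 s) {n : ℕ}
    {C C' : Config Λ} (h : StepsN Γ n C C') : n + C' s ≤ C s := by
  induction h with
  | refl => simp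
  | tail _ hstep ih =>
    have := hstep.lt_of_forall_consumes hΓ
    omega

theorem StepsN.le_of_forall_consumes (hΓ : ∀ R ∈ Γ, R.2 s < R.1 s) {n : ℕ}
    {C C' : Config Λ} (h : StepsN Γ n C C') : n ≤ C s :=
  (Nat.le_add_right n _).trans (h.add_le_of_forall_consumes hΓ)

end Consuming

theorem le_vol {Λ : Type*} [Fintype Λ] (C : Config Λ) (s : Λ) : C s ≤ vol C :=
  Finset.single_le_sum (fun i _ => Nat.zero_le (C i)) (Finset.mem_univ s)

/-- key quantitative fact: if a non-autogenesis rule `R` strictly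
decreases the count of some species `s` (`R_p s < R_r s`), then the number `n` of
contiguous applications of `R` (its block in an ordered application) starting from a
configuration `C` is at most the count `C s` at the start of the block, which is in
turn at most the volume of `C`. -/
theorem stmt15 {Λ : Type*} [Fintype Λ] (R : Rule Λ) (s : Λ)
    (hcons : R.2 s < R.1 s)
    (n : ℕ) (C C' : Config Λ) (h : StepsN ({R} : Set (Rule Λ)) n C C') :
    n ≤ C s ∧ C s ≤ vol C :=
  ⟨h.le_of_forall_consumes (by simpa using hcons), le_vol C s⟩
end

section
/- Let G = (V, E) be a directed graph with distinguished vertices s, t. Construct the CRN with species {X, X^v : X ∈ V} ∪ {X*_i : X ∈ V, 0 ≤ i ≤ |V|}, rules { A*_i + B → A^v + B*_{i+1} : (A,B) ∈ E, 0 ≤ i < |V| }, initial configuration I = {s*_0} ∪ { X : X ∈ V, X ≠ s } (one copy each), and target configuration D = { X^v : X ∈ V, X ≠ t } ∪ { t*_{|V|−1} }. Then D is reachable from I if and only if G has a Hamiltonian path from s to t. -/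
/-- Species of the Hamiltonian-path construction: plain `X`, visited `X^v`,
and starred `X*_i`. -/
abbrev Sp (V : Type*) := V ⊕ V ⊕ (V × ℕ)

def plain {V : Type*} (X : V) : Sp V := Sum.inl X
def vis {V : Type*} (X : V) : Sp V := Sum.inr (Sum.inl X)
def star {V : Type*} (X : V) (i : ℕ) : Sp V := Sum.inr (Sum.inr (X, i))

/-- Rules `A*_i + B → A^v + B*_{i+1}` for edges `(A,B) ∈ E` and `0 ≤ i < |V|`. -/
def hamRules {V : Type*} [Fintype V] [DecidableEq V] (E : V → V → Prop) :
    Set (Rule (Sp V)) :=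
  {R | ∃ A B i, E A B ∧ i < Fintype.card V ∧
    R = ((Pi.single (star A i) 1 + Pi.single (plain B) 1 : Sp V → ℕ),
         (Pi.single (vis A) 1 + Pi.single (star B (i + 1)) 1 : Sp V → ℕ))}

/-- Initial configuration: one copy of `s*_0` and one copy of each plain `X ≠ s`. -/
def hamI {V : Type*} [DecidableEq V] (s : V) : Config (Sp V)
  | Sum.inl X => if X = s then 0 else 1
  | Sum.inr (Sum.inl _) => 0
  | Sum.inr (Sum.inr p) => if p = (s, 0) then 1 else 0

/-- Target configuration: one copy of each `X^v` for `X ≠ t`, and one copy of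
`t*_{|V|-1}`. -/
def hamD {V : Type*} [Fintype V] [DecidableEq V] (t : V) : Config (Sp V)
  | Sum.inl _ => 0
  | Sum.inr (Sum.inl X) => if X = t then 0 else 1
  | Sum.inr (Sum.inr p) => if p = (t, Fintype.card V - 1) then 1 else 0

/-!
The reachable configurations are exactly the encodings of simple paths from `s`: the unique
starred species marks the current end of the path and its index counts the vertices already
visited, a rule can only move the star along an edge to a still-plain vertex, and visited species
are never consumed. The target `hamD t` encodes such a path exactly when it ends at `t` and has
`|V|` vertices, i.e. when it is Hamiltonian.
-/

theorem List.Nodup.mem_of_length_eq_card {α : Type*} [Fintype α] {l : List α} (hl : l.Nodup)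
    (hlen : l.length = Fintype.card α) (x : α) : x ∈ l := by
  by_contra hx
  have := (List.nodup_cons.2 ⟨hx, hl⟩).length_le_card
  simp only [List.length_cons] at this
  omega

theorem List.nodup_append_singleton {α : Type*} {l : List α} {a : α} :
    (l ++ [a]).Nodup ↔ a ∉ l ∧ l.Nodup := by
  rw [← List.concat_eq_append, List.nodup_concat]

section HamiltonianCRN

variable {V : Type*} [DecidableEq V]

/-- The configuration after walking along the path `p ++ [A]`. -/
def pathConfig (p : List V) (A : V) : Config (Sp V)
  | Sum.inl X => if X ∈ p ∨ X = A then 0 else 1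
  | Sum.inr (Sum.inl X) => if X ∈ p then 1 else 0
  | Sum.inr (Sum.inr q) => if q = (A, p.length) then 1 else 0

theorem hamI_eq_pathConfig (s : V) : hamI s = pathConfig [] s := by
  funext x
  rcases x with X | X | q <;> simp [hamI, pathConfig]

def hamRule (A B : V) (i : ℕ) : Rule (Sp V) :=
  (Pi.single (star A i) 1 + Pi.single (plain B) 1,
    Pi.single (vis A) 1 + Pi.single (star B (i + 1)) 1)

theorem mem_hamRules_iff [Fintype V] {E : V → V → Prop} {R : Rule (Sp V)} :
    R ∈ hamRules E ↔ ∃ A B i, E A B ∧ i < Fintype.card V ∧ R = hamRule A B i :=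
  Iff.rfl

theorem applicable_hamRule_pathConfig_iff {p : List V} {A A' B : V} {i : ℕ} :
    Applicable (hamRule A' B i) (pathConfig p A) ↔ A' = A ∧ i = p.length ∧ B ∉ p ∧ B ≠ A := by
  constructor
  · intro h
    have hstar := h (star A' i)
    have hplain := h (plain B)
    simp [hamRule, pathConfig, _root_.star, plain] at hstar hplain
    split_ifs at hstar hplain <;> simp_all
  · rintro ⟨rfl, rfl, hBp, hBA⟩ x
    rcases x with X | X | q <;>
      simp [hamRule, pathConfig, _root_.star, plain, vis, Pi.single_apply]
    grind

theorem applyRule_hamRule_pathConfig {p : List V} {A B : V} (hA : A ∉ p) :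
    applyRule (hamRule A B p.length) (pathConfig p A) = pathConfig (p ++ [A]) B := by
  funext x
  rcases x with X | X | q <;>
    simp [applyRule, hamRule, pathConfig, _root_.star, plain, vis, Pi.single_apply] <;> grind

variable [Fintype V] {E : V → V → Prop}

theorem step_pathConfig_iff {p : List V} {A : V} {C : Config (Sp V)} (hnd : (p ++ [A]).Nodup) :
    Step (hamRules E) (pathConfig p A) C ↔
      ∃ B, E A B ∧ B ∉ p ++ [A] ∧ C = pathConfig (p ++ [A]) B := by
  have hA : A ∉ p := (List.nodup_append_singleton.1 hnd).1
  constructor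
  · rintro ⟨_, ⟨A', B, i, hE, -, rfl⟩, happ, rfl⟩
    obtain ⟨rfl, rfl, hBp, hBA⟩ := applicable_hamRule_pathConfig_iff.1 happ
    exact ⟨B, hE, by simp [hBp, hBA], applyRule_hamRule_pathConfig hA⟩
  · rintro ⟨B, hE, hB, rfl⟩
    have hlen := (List.nodup_append_singleton.2 ⟨hB, hnd⟩).length_le_card
    simp only [List.length_append, List.length_singleton] at hlen
    simp only [List.mem_append, List.mem_singleton, not_or] at hB
    exact ⟨_, mem_hamRules_iff.2 ⟨A, B, p.length, hE, by omega, rfl⟩,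
      applicable_hamRule_pathConfig_iff.2 ⟨rfl, rfl, hB⟩, (applyRule_hamRule_pathConfig hA).symm⟩

theorem reachable_hamI_iff {s : V} {C : Config (Sp V)} :
    Reachable (hamRules E) (hamI s) C ↔
      ∃ p A, (p ++ [A]).Nodup ∧ (p ++ [A]).head? = some s ∧ (p ++ [A]).IsChain E ∧
        C = pathConfig p A := by
  constructor
  · intro h
    induction h with
    | refl => exact ⟨[], s, by simp, rfl, by simp, hamI_eq_pathConfig s⟩
    | tail _ hstep ih =>
      obtain ⟨p, A, hnd, hhead, hchain, rfl⟩ := ih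
      obtain ⟨B, hE, hnd', rfl⟩ := (step_pathConfig_iff hnd).1 hstep
      refine ⟨p ++ [A], B, List.nodup_append_singleton.2 ⟨hnd', hnd⟩, by simp_all, ?_, rfl⟩
      simpa [List.isChain_append_cons_cons, hE] using hchain
  · rintro ⟨p, A, hnd, hhead, hchain, rfl⟩
    induction p using List.reverseRecOn generalizing A with
    | nil =>
      obtain rfl : A = s := by simpa using hhead
      rw [← hamI_eq_pathConfig]
      exact .refl
    | append_singleton q A' ih =>
      obtain ⟨hA, hnd'⟩ := List.nodup_append_singleton.1 hnd
      simp only [List.append_assoc, List.cons_append, List.nil_append,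
        List.isChain_append_cons_cons] at hhead hchain
      exact .tail (ih A' hnd' (by simp_all) hchain.1)
        ((step_pathConfig_iff hnd').2 ⟨A, hchain.2.1, hA, rfl⟩)

theorem pathConfig_eq_hamD_iff {p : List V} {A t : V} (hnd : (p ++ [A]).Nodup) :
    pathConfig p A = hamD t ↔ A = t ∧ (p ++ [A]).length = Fintype.card V := by
  have hcard : 0 < Fintype.card V := Fintype.card_pos_iff.2 ⟨A⟩
  constructor
  · intro h
    have hstar := congrFun h (star t (Fintype.card V - 1))
    simp only [pathConfig, hamD, _root_.star, if_true, Prod.mk.injEq] at hstar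
    split_ifs at hstar with hq
    simp only [List.length_append, List.length_singleton]
    exact ⟨hq.1.symm, by omega⟩
  · rintro ⟨rfl, hlen⟩
    have hmem : ∀ X, X ∈ p ↔ X ≠ A := fun X => by
      have hA := (List.nodup_append_singleton.1 hnd).1
      have hX := hnd.mem_of_length_eq_card hlen X
      rw [List.mem_append, List.mem_singleton] at hX
      exact ⟨fun h hXA => hA (hXA ▸ h), hX.resolve_right⟩
    simp only [List.length_append, List.length_singleton] at hlen
    funext x
    rcases x with X | X | q
    · simp [pathConfig, hamD, hmem]
    · simp [pathConfig, hamD, hmem]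
    · simp [pathConfig, hamD, ← hlen]

end HamiltonianCRN

/-- the target configuration is reachable from the initial configuration
iff the graph `(V, E)` has a Hamiltonian path from `s` to `t` (a duplicate-free list of
all vertices, starting at `s`, ending at `t`, consecutive vertices joined by edges). -/
theorem stmt16 {V : Type*} [Fintype V] [DecidableEq V] (E : V → V → Prop) (s t : V) :
    Reachable (hamRules E) (hamI s) (hamD t) ↔
      ∃ l : List V, l.Nodup ∧ l.length = Fintype.card V ∧
        l.head? = some s ∧ l.getLast? = some t ∧ l.Chain' E := by
  rw [reachable_hamI_iff]
  constructor
  · rintro ⟨p, A, hnd, hhead, hchain, hD⟩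
    obtain ⟨rfl, hlen⟩ := (pathConfig_eq_hamD_iff hnd).1 hD.symm
    exact ⟨p ++ [A], hnd, hlen, hhead, by simp, hchain⟩
  · rintro ⟨l, hnd, hlen, hhead, hlast, hchain⟩
    obtain ⟨p, rfl⟩ := List.getLast?_eq_some_iff.1 hlast
    exact ⟨p, t, hnd, hhead, hchain, ((pathConfig_eq_hamD_iff hnd).2 ⟨rfl, hlen⟩).symm⟩
end
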